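/- Tree-unraveling preserves acceptance for distributed automata: the language of a distributed automaton A is nonempty if and only if it contains a pointed directed rooted tree. More precisely, if A accepts a pointed digraph (G, v), and t is the first time at which v visits an accepting state, then the pointed ditree (G', v') obtained by unraveling G from v to depth t (the root v' is a copy of v; the incoming neighbors of each copied node are fresh copies of the incoming neighbors of the original, iterated t times) satisfies: the state of v' at each time s ≤ t in the run of A on G' equals the state of v at time s in the run of A on G; hence A accepts (G', v'). -/

import Mathlib

/-- A finite nonempty Σ-labeled 1-relational digraph. -/
structure DGraph (A : Type) where
  V : Type
  [finV : Finite V]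
  [neV : Nonempty V]
  E : V → V → Prop
  lab : V → A

attribute [instance] DGraph.finV DGraph.neV

/-- A distributed automaton `A = (Q, ι, δ, F)` over Σ-labeled 1-relational
digraphs. -/
structure DA (A : Type) where
  Q : Type
  [finQ : Finite Q]
  ι : A → Q
  δ : Q → Set Q → Q
  F : Set Q

attribute [instance] DA.finQ

/-- The run: `ρ_0(v) = ι(λ(v))`,
`ρ_{t+1}(v) = δ(ρ_t(v), {ρ_t(u) : (u,v) an edge})`. -/
def DA.run {A : Type} (M : DA A) (G : DGraph A) : ℕ → G.V → M.Q
  | 0, v => M.ι (G.lab v)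
  | t+1, v => M.δ (M.run G t v) {q | ∃ u, G.E u v ∧ M.run G t u = q}

/-- Acceptance of a pointed digraph. -/
def DA.Accepts {A : Type} (M : DA A) (G : DGraph A) (v : G.V) : Prop :=
  ∃ t, M.run G t v ∈ M.F

/-- `p` is a directed path in `G` from `u` to `root` (as a list of successive
nodes following the edges). -/
def IsPathTo {A : Type} (G : DGraph A) (u root : G.V) (p : List G.V) : Prop :=
  p.Chain' G.E ∧ p.head? = some u ∧ p.getLast? = some root

/-- `G` is a directed rooted tree (ditree) with root `root`: from each node
there is exactly one directed path to the root. -/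
def IsDitree {A : Type} (G : DGraph A) (root : G.V) : Prop :=
  ∀ u : G.V, ∃! p : List G.V, IsPathTo G u root p

/-- The dipath whose node labels spell the nonempty word `w`. -/
def pathGraph {A : Type} (w : List A) (h : w ≠ []) : DGraph A where
  V := Fin w.length
  neV := ⟨⟨0, List.length_pos_of_ne_nil h⟩⟩
  E := fun u v => u.val + 1 = v.val
  lab := fun i => w.get i

/-- The last node of the dipath spelling `w`. -/
def lastNode {A : Type} (w : List A) (h : w ≠ []) : (pathGraph w h).V :=
  ⟨w.length - 1, by have := List.length_pos_of_ne_nil h; omega⟩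

/-- A monovisioned distributed automaton: it has a rejecting sink state `⊥ ∉ F`
with `δ(q,N) = ⊥` whenever `|N| > 1` or `⊥ ∈ N` or `q = ⊥`. -/
structure MonoDA (A : Type) extends DA A where
  bot : Q
  bot_not_accept : bot ∉ F
  sink : ∀ (q : Q) (N : Set Q),
    (¬ N.Subsingleton ∨ bot ∈ N ∨ q = bot) → δ q N = bot


section Unravel

variable {A : Type} (G : DGraph A) (v : G.V) (t : ℕ)

/-- Condition for a list to be a vertex of the depth-`t` unraveling of `G`
at `v`: a nonempty directed path of length at most `t+1` ending at `v`. -/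
def UnrCond (p : List G.V) : Prop :=
  p ≠ [] ∧ p.length ≤ t + 1 ∧ p.Chain' G.E ∧ p.getLast? = some v

lemma UnrCond.tail {G : DGraph A} {v : G.V} {t : ℕ} {a b : G.V} {q : List G.V}
    (h : UnrCond G v t (a :: b :: q)) : UnrCond G v t (b :: q) := by
  obtain ⟨-, hlen, hch, hlast⟩ := h
  exact ⟨List.cons_ne_nil _ _, by simp at hlen ⊢; omega,
    (List.isChain_cons.mp hch).2, by rwa [List.getLast?_cons_cons] at hlast⟩

/-- The depth-`t` unraveling of `G` at `v`. -/
def unrG : DGraph A where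
  V := {p : List G.V // UnrCond G v t p}
  finV := by
    have : {p : List G.V | UnrCond G v t p}.Finite :=
      (List.finite_length_le G.V (t + 1)).subset (fun p hp => hp.2.1)
    exact this.to_subtype
  neV := ⟨⟨[v], List.cons_ne_nil _ _, by simp, List.isChain_singleton _, rfl⟩⟩
  E := fun p q => ∃ u, p.1 = u :: q.1
  lab := fun p => G.lab (p.1.head p.2.1)

/-- The root of the unraveling. -/
def unrRoot : (unrG G v t).V :=
  ⟨[v], List.cons_ne_nil _ _, by simp, List.isChain_singleton _, rfl⟩

/-- The canonical path from a vertex of the unraveling to the root. -/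
def toUnrPath : (p : List G.V) → UnrCond G v t p → List (unrG G v t).V
  | [], h => absurd rfl h.1
  | [a], h => [⟨[a], h⟩]
  | a :: b :: q, h => ⟨a :: b :: q, h⟩ :: toUnrPath (b :: q) h.tail

lemma toUnrPath_isPath : ∀ (p : List G.V) (h : UnrCond G v t p),
    IsPathTo (unrG G v t) ⟨p, h⟩ (unrRoot G v t) (toUnrPath G v t p h)
  | [], h => absurd rfl h.1
  | [a], h => by
    have ha : a = v := by simpa using h.2.2.2
    subst ha
    exact ⟨List.isChain_singleton _, rfl, rfl⟩
  | a :: b :: q, h => by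
    obtain ⟨ich, ihead, ilast⟩ := toUnrPath_isPath (b :: q) h.tail
    refine ⟨?_, rfl, ?_⟩
    · rw [toUnrPath]
      refine List.isChain_cons.mpr ⟨fun y hy => ?_, ich⟩
      rw [ihead] at hy
      obtain rfl : (⟨b :: q, h.tail⟩ : (unrG G v t).V) = y := Option.some.inj (Option.mem_def.mp hy)
      exact ⟨a, rfl⟩
    · rw [toUnrPath]
      have hne : toUnrPath G v t (b :: q) h.tail ≠ [] := by
        intro hnil
        rw [hnil] at ihead; simp at ihead
      obtain ⟨z, l', hzl⟩ := List.exists_cons_of_ne_nil hne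
      rw [hzl]; erw [List.getLast?_cons_cons, ← hzl]
      exact ilast

lemma toUnrPath_unique (L : List (unrG G v t).V) : ∀ (u : (unrG G v t).V),
    IsPathTo (unrG G v t) u (unrRoot G v t) L → L = toUnrPath G v t u.1 u.2 := by
  induction L with
  | nil => rintro u ⟨-, hh, -⟩; simp at hh
  | cons x L ih =>
    rintro u ⟨hch, hh, hl⟩
    obtain rfl : x = u := by simpa using hh
    cases L with
    | nil =>
      have hroot : x = unrRoot G v t := by simpa using hl
      subst hroot
      rfl
    | cons y L' =>
      obtain ⟨hxy, hch'⟩ := List.isChain_cons_cons.mp hch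
      obtain ⟨yl, hy⟩ := y
      cases yl with
      | nil => exact absurd rfl hy.1
      | cons c q =>
        obtain ⟨w, hw⟩ := hxy
        obtain ⟨xl, hx⟩ := x
        simp only at hw
        subst hw
        have ihp := ih ⟨c :: q, hy⟩
          ⟨hch', rfl, by erw [List.getLast?_cons_cons] at hl; exact hl⟩
        rw [toUnrPath]
        exact congrArg _ ihp

lemma unrG_isDitree : IsDitree (unrG G v t) (unrRoot G v t) := fun u =>
  ⟨toUnrPath G v t u.1 u.2, toUnrPath_isPath G v t u.1 u.2,
    fun L hL => toUnrPath_unique G v t L u hL⟩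

lemma run_unr (M : DA A) : ∀ (s : ℕ) (p : List G.V) (h : UnrCond G v t p),
    p.length + s ≤ t + 1 →
    M.run (unrG G v t) s ⟨p, h⟩ = M.run G s (p.head h.1)
  | 0, p, h => fun _ => rfl
  | s + 1, p, h => by
    intro hle
    have hle' : p.length + s ≤ t + 1 := by omega
    simp only [DA.run]; rw [run_unr M s p h hle']
    congr 1
    ext q
    constructor
    · rintro ⟨⟨ul, hul⟩, ⟨w, hw⟩, hq⟩
      simp only at hw
      subst hw
      refine ⟨w, ?_, ?_⟩
      · have := (List.isChain_cons.mp hul.2.2.1).1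
        exact this _ (List.head?_eq_head h.1)
      · rw [← hq, run_unr M s (w :: p) hul (by simp only [List.length_cons]; omega)]
        rfl
    · rintro ⟨u, hE, hq⟩
      obtain ⟨c, q', rfl⟩ := List.exists_cons_of_ne_nil h.1
      have hcond : UnrCond G v t (u :: c :: q') := by
        refine ⟨List.cons_ne_nil _ _, by simp at hle ⊢; omega, ?_, ?_⟩
        · exact List.isChain_cons_cons.mpr ⟨hE, h.2.2.1⟩
        · rw [List.getLast?_cons_cons]; exact h.2.2.2
      refine ⟨⟨u :: c :: q', hcond⟩, ⟨u, rfl⟩, ?_⟩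
      rw [run_unr M s (u :: c :: q') hcond (by simp only [List.length_cons] at hle ⊢; omega)]
      exact hq

end Unravel

/-- tree-unraveling preserves acceptance: the language of a
distributed automaton is nonempty iff it contains a pointed ditree. -/
theorem nonempty_iff_accepts_ditree (A : Type) (M : DA A) :
    (∃ (G : DGraph A) (v : G.V), M.Accepts G v) ↔
      ∃ (G : DGraph A) (root : G.V), IsDitree G root ∧ M.Accepts G root := by
  constructor
  · rintro ⟨G, v, t, ht⟩
    refine ⟨unrG G v t, unrRoot G v t, unrG_isDitree G v t, t, ?_⟩
    have := run_unr G v t M t [v] (unrRoot G v t).2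
      (by simp only [List.length_cons, List.length_nil]; omega)
    rw [show unrRoot G v t = ⟨[v], (unrRoot G v t).2⟩ from rfl, this]
    exact ht
  · rintro ⟨G, root, -, h⟩
    exact ⟨G, root, h⟩
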